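/- Let F : Y → [0, +∞) be convex and Fréchet differentiable with gradient ∇F, let J : X → ℝ ∪ {+∞} be proper and convex, let τ > 0 be such that J_τ(u) := J(u) − τ F(Ku) is convex on X, and let δ ≥ 0 and u† ∈ X with F(Ku†) ≤ δ and J_τ(u†) < ∞. Suppose for a fixed k ≥ 1 the linearized Bregman iterates satisfy: q^{k−1} ∈ ∂J_τ(u^{k−1}), q^k := q^{k−1} − τ K*∇F(Ku^k) ∈ ∂J_τ(u^k), and δ < F(Ku^k). Then the surrogate Bregman distances to u† are strictly Fejér monotone: D_{J_τ}^{q^k}(u†, u^k) < D_{J_τ}^{q^{k−1}}(u†, u^{k−1}). -/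

import Mathlib

open scoped RealInnerProductSpace

/-- Subgradient of an extended-real-valued convex function:
p ∈ ∂G(v) means G(w) ≥ G(v) + ⟨p, w − v⟩ for all w. -/
def ESubgradAt {X : Type*} [NormedAddCommGroup X] [InnerProductSpace ℝ X]
    (G : X → EReal) (p v : X) : Prop :=
  ∀ w, G v + (⟪p, w - v⟫ : ℝ) ≤ G w

/-- Generalized Bregman distance D_G^p(u, v) := G(u) − G(v) − ⟨p, u − v⟩. -/
noncomputable def ebreg {X : Type*} [NormedAddCommGroup X] [InnerProductSpace ℝ X]
    (G : X → EReal) (p u v : X) : EReal :=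
  G u - G v - (⟪p, u - v⟫ : ℝ)

/-!
Write `G = J_τ` and `r = τ K*∇F(Ku^k)`. Expanding the two Bregman distances, their difference is
`-D_G^{q^{k-1}}(u^k, u^{k-1}) + ⟪r, u† - u^k⟫`. The first term is nonpositive because `q^{k-1}`
is a subgradient, and by the gradient inequality of the convex `F` the second is at most
`τ (F(Ku†) - F(Ku^k)) ≤ τ (δ - F(Ku^k)) < 0`.
-/

theorem EReal.sub_coe_ne_bot {a : EReal} (ha : a ≠ ⊥) (r : ℝ) : a - r ≠ ⊥ := by
  rw [sub_eq_add_neg, ← EReal.coe_neg]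
  exact EReal.add_ne_bot_iff.2 ⟨ha, EReal.coe_ne_bot _⟩

theorem ConvexOn.inner_gradient_le_sub {E : Type*} [NormedAddCommGroup E]
    [InnerProductSpace ℝ E] [CompleteSpace E] {s : Set E} {f : E → ℝ} (hf : ConvexOn ℝ s f)
    {x y g : E} (hx : x ∈ s) (hy : y ∈ s) (hg : HasGradientAt f g x) :
    ⟪g, y - x⟫ ≤ f y - f x := by
  set ℓ : ℝ →ᵃ[ℝ] E := AffineMap.lineMap x y
  have hline : ConvexOn ℝ (ℓ ⁻¹' s) (f ∘ ℓ) := hf.comp_affineMap ℓ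
  have hderiv : HasDerivAt (f ∘ ℓ) ⟪g, y - x⟫ 0 := by
    have hg' : HasFDerivAt f (InnerProductSpace.toDual ℝ E g) (ℓ 0) := by
      simpa [ℓ] using hg.hasFDerivAt
    simpa using hg'.comp_hasDerivAt (0 : ℝ) AffineMap.hasDerivAt_lineMap
  have := hline.le_slope_of_hasDerivAt (by simpa [ℓ] using hx) (by simpa [ℓ] using hy)
    zero_lt_one hderiv
  simpa [slope_def_field, ℓ] using this

section Bregman

variable {X : Type*} [NormedAddCommGroup X] [InnerProductSpace ℝ X] {G : X → EReal}

theorem ESubgradAt.ne_top {p v w : X} (h : ESubgradAt G p v) (hw : G w ≠ ⊤) : G v ≠ ⊤ := by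
  intro hv
  have := h w
  rw [hv, EReal.top_add_coe, top_le_iff] at this
  exact hw this

theorem ebreg_sub_lt_of_inner_neg {q r u₀ u₁ w : X} (hq : ESubgradAt G q u₀) (hw : G w ≠ ⊤)
    (hu₁ : G u₁ ≠ ⊤) (hbot : ∀ x, G x ≠ ⊥) (hr : ⟪r, w - u₁⟫ < 0) :
    ebreg G (q - r) w u₁ < ebreg G q w u₀ := by
  obtain ⟨a, ha⟩ : ∃ a : ℝ, G w = a := ⟨_, (EReal.coe_toReal hw (hbot w)).symm⟩
  obtain ⟨b, hb⟩ : ∃ b : ℝ, G u₀ = b :=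
    ⟨_, (EReal.coe_toReal (hq.ne_top hw) (hbot u₀)).symm⟩
  obtain ⟨c, hc⟩ : ∃ c : ℝ, G u₁ = c := ⟨_, (EReal.coe_toReal hu₁ (hbot u₁)).symm⟩
  have hsub : b + ⟪q, u₁ - u₀⟫ ≤ c := by
    have := hq u₁
    rw [hb, hc] at this
    exact_mod_cast this
  have hsplit : ⟪q - r, w - u₁⟫ = ⟪q, w - u₀⟫ - ⟪q, u₁ - u₀⟫ - ⟪r, w - u₁⟫ := by
    rw [inner_sub_left, show w - u₁ = (w - u₀) - (u₁ - u₀) by abel, inner_sub_right]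
  unfold ebreg
  rw [ha, hb, hc]
  norm_cast
  linarith

end Bregman

theorem stmt_13_general
    {X Y : Type*} [NormedAddCommGroup X] [InnerProductSpace ℝ X] [CompleteSpace X]
    [NormedAddCommGroup Y] [InnerProductSpace ℝ Y] [CompleteSpace Y]
    (K : X →L[ℝ] Y)
    (F : Y → ℝ) (gF : Y → Y)
    (hFgrad : ∀ y, HasGradientAt F (gF y) y)
    (hFconv : ConvexOn ℝ Set.univ F)
    (J : X → EReal)
    (hJbot : ∀ u, J u ≠ ⊥)
    (τ : ℝ) (hτ : 0 < τ)
    (δ : ℝ) (udag : X)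
    (hdata : F (K udag) ≤ δ)
    (hJτudag : J udag - ((τ * F (K udag) : ℝ) : EReal) ≠ ⊤)
    (u₀ u₁ q₀ : X)
    (hq₀ : ESubgradAt (fun x => J x - ((τ * F (K x) : ℝ) : EReal)) q₀ u₀)
    (hq₁ : ESubgradAt (fun x => J x - ((τ * F (K x) : ℝ) : EReal))
      (q₀ - τ • ContinuousLinearMap.adjoint K (gF (K u₁))) u₁)
    (hdisc : δ < F (K u₁)) :
    ebreg (fun x => J x - ((τ * F (K x) : ℝ) : EReal))
        (q₀ - τ • ContinuousLinearMap.adjoint K (gF (K u₁))) udag u₁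
      < ebreg (fun x => J x - ((τ * F (K x) : ℝ) : EReal)) q₀ udag u₀ := by
  apply ebreg_sub_lt_of_inner_neg hq₀ hJτudag (hq₁.ne_top hJτudag)
    fun x => EReal.sub_coe_ne_bot (hJbot x) _
  have hgrad : ⟪gF (K u₁), K udag - K u₁⟫ ≤ F (K udag) - F (K u₁) :=
    hFconv.inner_gradient_le_sub (Set.mem_univ _) (Set.mem_univ _) (hFgrad (K u₁))
  calc ⟪τ • ContinuousLinearMap.adjoint K (gF (K u₁)), udag - u₁⟫
      = τ * ⟪gF (K u₁), K udag - K u₁⟫ := by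
        rw [real_inner_smul_left, ContinuousLinearMap.adjoint_inner_left, map_sub]
    _ < 0 := mul_neg_of_pos_of_neg hτ (by linarith)

/-- **Strict Fejér monotonicity of the linearized Bregman iteration before the
discrepancy principle is met.** F : Y → [0, ∞) convex Fréchet differentiable with
gradient ∇F, J proper convex, τ > 0 with J_τ(u) := J(u) − τF(Ku) convex,
F(Ku†) ≤ δ and J_τ(u†) < ∞. If q^{k−1} ∈ ∂J_τ(u^{k−1}),
q^k := q^{k−1} − τK*∇F(Ku^k) ∈ ∂J_τ(u^k) and δ < F(Ku^k), then
D_{J_τ}^{q^k}(u†, u^k) < D_{J_τ}^{q^{k−1}}(u†, u^{k−1}). -/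
theorem stmt_13
    {X Y : Type*} [NormedAddCommGroup X] [InnerProductSpace ℝ X] [CompleteSpace X]
    [NormedAddCommGroup Y] [InnerProductSpace ℝ Y] [CompleteSpace Y]
    (K : X →L[ℝ] Y)
    (F : Y → ℝ) (gF : Y → Y)
    (hFgrad : ∀ y, HasGradientAt F (gF y) y)
    (hFconv : ConvexOn ℝ Set.univ F) (hFnonneg : ∀ y, 0 ≤ F y)
    (J : X → EReal)
    (hJbot : ∀ u, J u ≠ ⊥)
    (hJproper : ∃ u, J u ≠ ⊤)
    (hJconv : ∀ u v : X, ∀ t : ℝ, 0 ≤ t → t ≤ 1 →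
      J (t • u + (1 - t) • v) ≤ (t : EReal) * J u + ((1 - t : ℝ) : EReal) * J v)
    (τ : ℝ) (hτ : 0 < τ)
    (hJτconv : ∀ u v : X, ∀ t : ℝ, 0 ≤ t → t ≤ 1 →
      (J (t • u + (1 - t) • v) - ((τ * F (K (t • u + (1 - t) • v)) : ℝ) : EReal))
        ≤ (t : EReal) * (J u - ((τ * F (K u) : ℝ) : EReal))
          + ((1 - t : ℝ) : EReal) * (J v - ((τ * F (K v) : ℝ) : EReal)))
    (δ : ℝ) (hδ : 0 ≤ δ) (udag : X)
    (hdata : F (K udag) ≤ δ)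
    (hJτudag : J udag - ((τ * F (K udag) : ℝ) : EReal) ≠ ⊤)
    (u₀ u₁ q₀ : X)
    (hq₀ : ESubgradAt (fun x => J x - ((τ * F (K x) : ℝ) : EReal)) q₀ u₀)
    (hq₁ : ESubgradAt (fun x => J x - ((τ * F (K x) : ℝ) : EReal))
      (q₀ - τ • ContinuousLinearMap.adjoint K (gF (K u₁))) u₁)
    (hdisc : δ < F (K u₁)) :
    ebreg (fun x => J x - ((τ * F (K x) : ℝ) : EReal))
        (q₀ - τ • ContinuousLinearMap.adjoint K (gF (K u₁))) udag u₁
      < ebreg (fun x => J x - ((τ * F (K x) : ℝ) : EReal)) q₀ udag u₀ :=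
  stmt_13_general K F gF hFgrad hFconv J hJbot τ hτ δ udag hdata hJτudag u₀ u₁ q₀ hq₀ hq₁ hdisc
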